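/- Let (u₁ₙ, u₂ₙ) be a sequence of solutions of the Gudnason system and suppose there is ν₀ > 0 with sup_{𝕋∖Z} u₁ₙ ≤ −ν₀ for all n. Then for all sufficiently large n, 4π𝔐 ≤ ∫_𝕋 e^{w₁ₙ} dx ≤ 2(𝔑 + 8π𝔐)/(1 − e^{−ν₀}), where w₁ₙ := u₁ₙ − 2 ln εₙ. -/

import Mathlib

open MeasureTheory Real Filter

noncomputable section

abbrev Plane : Type := EuclideanSpace ℝ (Fin 2)

/-- Second directional derivative of `u` at `x` in the direction `v`. -/
def dirDeriv2 (u : Plane → ℝ) (v x : Plane) : ℝ :=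
  deriv (fun t : ℝ => deriv (fun s : ℝ => u (x + s • v)) t) 0

/-- The flat Laplacian on the plane. -/
def lap (u : Plane → ℝ) (x : Plane) : ℝ :=
  ∑ i : Fin 2, dirDeriv2 u (EuclideanSpace.single i 1) x

/-- The data of the Gudnason model on a flat torus `ℝ²/Λ`. -/
structure GudnasonSetting where
  v : Fin 2 → Plane
  N : ℕ
  p : Fin N → Plane
  m : Fin N → ℕ
  𝔑 : ℝ
  α : ℕ → ℝ
  β : ℕ → ℝ
  u₀ : Plane → ℝ

namespace GudnasonSetting

/-- The lattice orbit of a point: all of its translates by the period lattice. -/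
def orbit (S : GudnasonSetting) (q : Plane) : Set Plane :=
  {x | ∃ k : Fin 2 → ℤ, x = q + (k 0 : ℝ) • S.v 0 + (k 1 : ℝ) • S.v 1}

/-- The set of vortex points (together with all of their lattice translates). -/
def Zset (S : GudnasonSetting) : Set Plane := ⋃ i, S.orbit (S.p i)

/-- A fundamental domain of the torus. -/
def fund (S : GudnasonSetting) : Set Plane :=
  (fun st : ℝ × ℝ => st.1 • S.v 0 + st.2 • S.v 1) '' (Set.Ico (0:ℝ) 1 ×ˢ Set.Ico (0:ℝ) 1)

/-- The total vortex multiplicity `𝔐 = Σ mᵢ`. -/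
def 𝔐 (S : GudnasonSetting) : ℝ := ∑ i, (S.m i : ℝ)

/-- `εₙ = 1/(αₙ + βₙ)`. -/
def ε (S : GudnasonSetting) (n : ℕ) : ℝ := 1 / (S.α n + S.β n)

/-- `σₙ = (βₙ - αₙ)/(αₙ + βₙ)`. -/
def σ (S : GudnasonSetting) (n : ℕ) : ℝ := (S.β n - S.α n) / (S.α n + S.β n)

/-- A function on the plane descends to the torus iff it is lattice-periodic. -/
def PeriodicOn (S : GudnasonSetting) (u : Plane → ℝ) : Prop :=
  ∀ x : Plane, ∀ i : Fin 2, u (x + S.v i) = u x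

/-- The standing hypotheses on the data of the Gudnason model. -/
structure Valid (S : GudnasonSetting) : Prop where
  indep : LinearIndependent ℝ S.v
  hN : 0 < S.N
  distinct : ∀ i j : Fin S.N, i ≠ j → S.p i ∉ S.orbit (S.p j)
  hm : ∀ i, 0 < S.m i
  h𝔑 : 0 < S.𝔑
  hα : ∀ n, 0 < S.α n
  hβ : ∀ n, 0 < S.β n
  hsum : Tendsto (fun n => S.α n + S.β n) atTop atTop
  hcoup₁ : ∀ n, 0 < (S.β n - S.α n) * (S.α n + S.β n)
  hcoup₂ : ∀ n, (S.β n - S.α n) * (S.α n + S.β n) ≤ S.𝔑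
  area : volume S.fund = 1
  u₀_per : S.PeriodicOn S.u₀
  u₀_smooth : ContDiffOn ℝ 2 S.u₀ S.Zsetᶜ
  u₀_lap : ∀ x ∉ S.Zset, lap S.u₀ x = -(8 * π * S.𝔐)
  u₀_int : (∫ x in S.fund, S.u₀ x) = 0
  u₀_sing : ∀ i, ∃ r > 0, ∃ h : Plane → ℝ,
      ContDiffOn ℝ 2 h (Metric.ball (S.p i) r) ∧
      ∀ x ∈ Metric.ball (S.p i) r, x ≠ S.p i →
        S.u₀ x = 4 * (S.m i : ℝ) * Real.log ‖x - S.p i‖ + h x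

/-- `(u₁, u₂)` is a solution of the Gudnason system at index `n`, where `v₁` is the
`C²` extension of `u₁ - u₀` to the whole torus. -/
structure IsSolution (S : GudnasonSetting) (n : ℕ) (u₁ u₂ v₁ : Plane → ℝ) : Prop where
  per₁ : S.PeriodicOn u₁
  per₂ : S.PeriodicOn u₂
  perv : S.PeriodicOn v₁
  u₂_smooth : ContDiff ℝ 2 u₂
  v₁_smooth : ContDiff ℝ 2 v₁
  v₁_def : ∀ x ∉ S.Zset, u₁ x = S.u₀ x + v₁ x
  u₁_neg : ∀ x ∉ S.Zset, u₁ x < 0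
  u₂_neg : ∀ x, u₂ x < 0
  exp_u₁_zero : ∀ z ∈ S.Zset,
      Tendsto (fun y => Real.exp (u₁ y)) (nhdsWithin z S.Zsetᶜ) (nhds 0)
  eq₁ : ∀ x ∉ S.Zset, lap u₁ x =
      (1 / (S.ε n) ^ 2) * (Real.exp (u₁ x) * (Real.exp (u₁ x) - 1)
        + (S.σ n) ^ 2 * Real.exp (u₂ x) * (Real.exp (u₁ x) - 1)
        - S.σ n * (Real.exp (u₁ x) + Real.exp (u₂ x)) * (Real.exp (u₂ x) - 1))
  eq₂ : ∀ x ∉ S.Zset, lap u₂ x =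
      (1 / (S.ε n) ^ 2) * (Real.exp (u₂ x) * (Real.exp (u₂ x) - 1)
        + (S.σ n) ^ 2 * Real.exp (u₁ x) * (Real.exp (u₂ x) - 1)
        - S.σ n * (Real.exp (u₁ x) + Real.exp (u₂ x)) * (Real.exp (u₁ x) - 1))

end GudnasonSetting

/-!
Integrating the first equation over the torus, the Laplacian of the smooth periodic part `v₁ₙ`
integrates to zero while `Δu₀ = -8π𝔐` off the null set `Z`; hence the nonlinearity `F` of that
equation satisfies `∫ -εₙ⁻² F = 8π𝔐`. Pointwise, `0 < e^{u₂ₙ} < 1`, `e^{u₁ₙ} ≤ e^{-ν₀}` and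
`σₙ/εₙ² ≤ 𝔑` give `-εₙ⁻² F - σₙ𝔑 ≤ e^{w₁ₙ}` and `(1 - e^{-ν₀}) e^{w₁ₙ} ≤ -εₙ⁻² F + 2𝔑`.
Integrating yields both bounds, the lower one as soon as `σₙ𝔑 ≤ 4π𝔐`, which holds eventually
since `σₙ → 0`.
-/

theorem apply_add_eq_of_mem_span {M α ι : Type*} [AddCommGroup M] {v : ι → M} {ψ : M → α}
    (hψ : ∀ i x, ψ (x + v i) = ψ x) {g : M} (hg : g ∈ Submodule.span ℤ (Set.range v)) (x : M) :
    ψ (g + x) = ψ x := by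
  let periods : AddSubgroup M :=
    { carrier := {g | ∀ x, ψ (g + x) = ψ x}
      zero_mem' := by simp
      add_mem' := fun ha hb x => by simp only [add_assoc, ha _, hb x]
      neg_mem' := fun ha x => by rw [← ha (-_ + x), add_neg_cancel_left] }
  have hspan : Submodule.span ℤ (Set.range v) ≤ periods.toIntSubmodule :=
    Submodule.span_le.2 (Set.range_subset_iff.2 fun i x => by rw [add_comm]; exact hψ i x)
  exact hspan hg x

section PeriodicIntegral

open ZSpan Submodule

variable {E : Type*} [NormedAddCommGroup E] [NormedSpace ℝ E] [FiniteDimensional ℝ E]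
  {ι : Type*} [Finite ι] (b : Module.Basis ι ℝ E) {W : Type*} [NormedAddCommGroup W]

theorem exists_forall_norm_le_of_periodic {ψ : E → W} (hψ : Continuous ψ)
    (hper : ∀ g ∈ span ℤ (Set.range b), ∀ x, ψ (g + x) = ψ x) : ∃ C, ∀ x, ‖ψ x‖ ≤ C := by
  obtain ⟨C, hC⟩ := (fundamentalDomain_isBounded b).isCompact_closure.exists_bound_of_continuousOn
    hψ.continuousOn
  refine ⟨C, fun x => ?_⟩
  obtain ⟨g, hg, -⟩ := exist_unique_vadd_mem_fundamentalDomain b x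
  rw [← hper g g.2 x]
  exact hC _ (subset_closure hg)

variable [MeasurableSpace E] [BorelSpace E]

theorem integrableOn_fundamentalDomain {μ : Measure E} [IsFiniteMeasureOnCompacts μ]
    {ψ : E → W} (hψ : Continuous ψ) :
    IntegrableOn ψ (fundamentalDomain b) μ :=
  (hψ.continuousOn.integrableOn_compact (fundamentalDomain_isBounded b).isCompact_closure).mono_set
    subset_closure

variable {μ : Measure E} [μ.IsAddHaarMeasure]

theorem setIntegral_fundamentalDomain_add [NormedSpace ℝ W] {ψ : E → W}
    (hper : ∀ g ∈ span ℤ (Set.range b), ∀ x, ψ (g + x) = ψ x) (c : E) :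
    ∫ x in fundamentalDomain b, ψ (c + x) ∂μ = ∫ x in fundamentalDomain b, ψ x ∂μ := by
  have : Countable (span ℤ (Set.range b)).toAddSubgroup :=
    inferInstanceAs (Countable (span ℤ (Set.range b)))
  have hF := ZSpan.isAddFundamentalDomain' b μ
  rw [← (measurePreserving_add_left μ c).setIntegral_image_emb (measurableEmbedding_addLeft c)]
  exact (hF.vadd_of_comm c).setIntegral_eq hF fun g x => hper g g.2 x

theorem integral_fderiv_apply_eq_zero_of_periodic {ψ : E → ℝ} (hψ : ContDiff ℝ 1 ψ)
    (hper : ∀ g ∈ span ℤ (Set.range b), ∀ x, ψ (g + x) = ψ x) (w : E) :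
    ∫ x in fundamentalDomain b, fderiv ℝ ψ x w ∂μ = 0 := by
  have hdiff : Differentiable ℝ ψ := hψ.differentiable one_ne_zero
  have hcont : Continuous (fderiv ℝ ψ) := hψ.continuous_fderiv one_ne_zero
  obtain ⟨C, hC⟩ := exists_forall_norm_le_of_periodic b hcont fun g hg x => by
    rw [← fderiv_comp_add_left, funext (hper g hg)]
  have : IsFiniteMeasure (μ.restrict (fundamentalDomain b)) :=
    isFiniteMeasure_restrict.mpr (fundamentalDomain_isBounded b).measure_lt_top.ne
  -- `t ↦ ∫_F ψ (t • w + x)` is constant by periodicity; differentiate it under the integral sign.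
  have := hasDerivAt_integral_of_dominated_loc_of_deriv_le (μ := μ.restrict (fundamentalDomain b))
    (F := fun t x => ψ (t • w + x)) (F' := fun t x => fderiv ℝ ψ (t • w + x) w) (x₀ := (0 : ℝ))
    (bound := fun _ => C * ‖w‖) Filter.univ_mem
    (Eventually.of_forall fun t => (hψ.continuous.comp (by fun_prop)).aestronglyMeasurable)
    (by simpa only [zero_smul, zero_add] using
      (integrableOn_fundamentalDomain b hψ.continuous).integrable)
    ((hcont.clm_apply continuous_const).comp (by fun_prop)).aestronglyMeasurable
    (Eventually.of_forall fun x t _ => (ContinuousLinearMap.le_opNorm _ _).trans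
      (mul_le_mul_of_nonneg_right (hC _) (norm_nonneg w)))
    (integrable_const _)
    (Eventually.of_forall fun x t _ => (hdiff _).hasFDerivAt.comp_hasDerivAt t
      (by simpa using ((hasDerivAt_id t).smul_const w).add_const x))
  simp only [setIntegral_fundamentalDomain_add b hper, zero_smul, zero_add] at this
  exact this.2.unique (hasDerivAt_const _ _)

end PeriodicIntegral

section Laplacian

variable {U : Set Plane} {φ a c : Plane → ℝ} {x w : Plane}

theorem ContDiffOn.differentiableAt_fderiv_apply (hU : IsOpen U) (hφ : ContDiffOn ℝ 2 φ U)
    (hx : x ∈ U) : DifferentiableAt ℝ (fun y => fderiv ℝ φ y w) x :=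
  (((hφ.fderiv_of_isOpen hU le_rfl).clm_apply contDiffOn_const).differentiableOn
    one_ne_zero).differentiableAt (hU.mem_nhds hx)

theorem dirDeriv2_eq_fderiv (hU : IsOpen U) (hφ : ContDiffOn ℝ 2 φ U) (hx : x ∈ U) :
    dirDeriv2 φ w x = fderiv ℝ (fun y => fderiv ℝ φ y w) x w := by
  have hline : ∀ t : ℝ, HasDerivAt (fun s : ℝ => x + s • w) w t := fun t => by
    simpa using ((hasDerivAt_id t).smul_const w).const_add x
  have hU₀ : ∀ᶠ t : ℝ in nhds 0, x + t • w ∈ U :=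
    (continuous_const.add (continuous_id.smul continuous_const)).continuousAt.preimage_mem_nhds
      (by simpa using hU.mem_nhds hx)
  have hderiv : (fun t => deriv (fun s : ℝ => φ (x + s • w)) t)
      =ᶠ[nhds 0] fun t => fderiv ℝ φ (x + t • w) w :=
    hU₀.mono fun t ht => (((hφ.contDiffAt (hU.mem_nhds ht)).differentiableAt
      two_ne_zero).hasFDerivAt.comp_hasDerivAt t (hline t)).deriv
  have hD : HasFDerivAt (fun y => fderiv ℝ φ y w) (fderiv ℝ (fun y => fderiv ℝ φ y w) x)
      (x + (0 : ℝ) • w) := by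
    simpa using (hφ.differentiableAt_fderiv_apply hU hx).hasFDerivAt
  exact ((hD.comp_hasDerivAt 0 (hline 0)).congr_of_eventuallyEq hderiv).deriv

theorem lap_eq_add_of_eqOn (hU : IsOpen U) (ha : ContDiffOn ℝ 2 a U) (hc : ContDiffOn ℝ 2 c U)
    (h : Set.EqOn φ (a + c) U) (hx : x ∈ U) : lap φ x = lap a x + lap c x := by
  have hdiff : ∀ {f : Plane → ℝ}, ContDiffOn ℝ 2 f U → ∀ y ∈ U, DifferentiableAt ℝ f y :=
    fun hf y hy => (hf.contDiffAt (hU.mem_nhds hy)).differentiableAt two_ne_zero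
  unfold lap
  rw [← Finset.sum_add_distrib]
  refine Finset.sum_congr rfl fun i _ => ?_
  set w : Plane := EuclideanSpace.single i 1
  have hfderiv : (fun y => fderiv ℝ φ y w) =ᶠ[nhds x]
      fun y => fderiv ℝ a y w + fderiv ℝ c y w := by
    filter_upwards [hU.mem_nhds hx] with y hy
    rw [(Filter.eventuallyEq_of_mem (hU.mem_nhds hy) h).fderiv_eq,
      fderiv_add (hdiff ha y hy) (hdiff hc y hy)]
    rfl
  rw [dirDeriv2_eq_fderiv hU ((ha.add hc).congr h) hx, dirDeriv2_eq_fderiv hU ha hx,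
    dirDeriv2_eq_fderiv hU hc hx, hfderiv.fderiv_eq,
    fderiv_fun_add (ha.differentiableAt_fderiv_apply hU hx)
      (hc.differentiableAt_fderiv_apply hU hx)]
  rfl

theorem lap_eq_sum_fderiv (hφ : ContDiff ℝ 2 φ) (x : Plane) :
    lap φ x = ∑ i : Fin 2, fderiv ℝ (fun y => fderiv ℝ φ y (EuclideanSpace.single i 1)) x
      (EuclideanSpace.single i 1) :=
  Finset.sum_congr rfl fun _ _ => dirDeriv2_eq_fderiv isOpen_univ hφ.contDiffOn (Set.mem_univ x)

theorem continuous_lap {φ : Plane → ℝ} (hφ : ContDiff ℝ 2 φ) : Continuous (lap φ) := by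
  rw [funext (lap_eq_sum_fderiv hφ)]
  exact continuous_finsetSum _ fun i _ => (((hφ.fderiv_right le_rfl).clm_apply
    contDiff_const).continuous_fderiv one_ne_zero).clm_apply continuous_const

theorem integral_lap_eq_zero_of_periodic {μ : Measure Plane} [μ.IsAddHaarMeasure]
    (b : Module.Basis (Fin 2) ℝ Plane) {φ : Plane → ℝ} (hφ : ContDiff ℝ 2 φ)
    (hper : ∀ g ∈ Submodule.span ℤ (Set.range b), ∀ x, φ (g + x) = φ x) :
    ∫ x in ZSpan.fundamentalDomain b, lap φ x ∂μ = 0 := by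
  have hD : ∀ w : Plane, ContDiff ℝ 1 fun y => fderiv ℝ φ y w := fun w =>
    (hφ.fderiv_right le_rfl).clm_apply contDiff_const
  simp_rw [lap_eq_sum_fderiv hφ]
  rw [integral_finsetSum _ fun i _ => integrableOn_fundamentalDomain b
    (((hD _).continuous_fderiv one_ne_zero).clm_apply continuous_const)]
  refine Finset.sum_eq_zero fun i _ => integral_fderiv_apply_eq_zero_of_periodic b (hD _)
    (fun g hg x => ?_) _
  rw [← fderiv_comp_add_left, funext (hper g hg)]

end Laplacian

-- The first Gudnason equation reads `Δu₁ = εₙ⁻² · gudnasonNonlinearity σₙ (e^{u₁}) (e^{u₂})`.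
def gudnasonNonlinearity (σ s t : ℝ) : ℝ :=
  s * (s - 1) + σ ^ 2 * t * (s - 1) - σ * (s + t) * (t - 1)

theorem neg_mul_gudnasonNonlinearity_le {σ s t c K : ℝ} (hσ : 0 ≤ σ) (hs : 0 ≤ s) (ht₀ : 0 ≤ t)
    (ht₁ : t ≤ 1) (hc : 0 ≤ c) (hcσ : c * σ ≤ K) :
    -(c * gudnasonNonlinearity σ s t) ≤ c * s + σ * K := by
  have hN : -gudnasonNonlinearity σ s t ≤ s + σ ^ 2 := by
    unfold gudnasonNonlinearity
    nlinarith [mul_nonneg hs hs, mul_nonneg (mul_nonneg (sq_nonneg σ) ht₀) hs,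
      mul_nonneg (mul_nonneg hσ (add_nonneg hs ht₀)) (sub_nonneg.2 ht₁),
      mul_le_mul_of_nonneg_left ht₁ (sq_nonneg σ)]
  nlinarith [mul_le_mul_of_nonneg_left hN hc, mul_le_mul_of_nonneg_left hcσ hσ]

theorem sub_le_neg_mul_gudnasonNonlinearity {σ s t δ c K : ℝ} (hσ : 0 ≤ σ) (hs₀ : 0 ≤ s)
    (hs₁ : s ≤ 1) (hsδ : s ≤ δ) (ht₀ : 0 ≤ t) (ht₁ : t ≤ 1) (hc : 0 ≤ c) (hcσ : c * σ ≤ K) :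
    (1 - δ) * (c * s) - 2 * K ≤ -(c * gudnasonNonlinearity σ s t) := by
  have hN : (1 - δ) * s - 2 * σ ≤ -gudnasonNonlinearity σ s t := by
    unfold gudnasonNonlinearity
    nlinarith [mul_nonneg hs₀ (sub_nonneg.2 hsδ),
      mul_nonneg (mul_nonneg (sq_nonneg σ) ht₀) (sub_nonneg.2 hs₁),
      mul_nonneg hσ (mul_nonneg (sub_nonneg.2 hs₁) (sub_nonneg.2 ht₁)),
      mul_nonneg hσ (mul_nonneg ht₀ ht₀), mul_nonneg hσ hs₀]
  nlinarith [mul_le_mul_of_nonneg_left hN hc, mul_le_mul_of_nonneg_left hcσ hσ]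

theorem exp_sub_two_mul_log {ε : ℝ} (hε : 0 < ε) (u : ℝ) :
    exp (u - 2 * log ε) = 1 / ε ^ 2 * exp u := by
  rw [exp_sub, show 2 * log ε = log (ε ^ 2) by rw [log_pow]; norm_num, exp_log (pow_pos hε 2)]
  ring

namespace GudnasonSetting

variable {S : GudnasonSetting}

def latticeBasis (hv : LinearIndependent ℝ S.v) : Module.Basis (Fin 2) ℝ Plane :=
  basisOfLinearIndependentOfCardEqFinrank hv (by simp)

@[simp]
theorem coe_latticeBasis (hv : LinearIndependent ℝ S.v) : ⇑(latticeBasis hv) = S.v :=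
  coe_basisOfLinearIndependentOfCardEqFinrank _ _

theorem fund_eq_fundamentalDomain (hv : LinearIndependent ℝ S.v) :
    S.fund = ZSpan.fundamentalDomain (latticeBasis hv) := by
  set b := latticeBasis hv
  have hvb : S.v = b := (coe_latticeBasis hv).symm
  ext x
  rw [ZSpan.mem_fundamentalDomain]
  constructor
  · rintro ⟨⟨s, t⟩, ⟨hs, ht⟩, rfl⟩ i
    rw [hvb]
    fin_cases i <;> simp_all
  · intro hx
    refine ⟨(b.repr x 0, b.repr x 1), ⟨hx 0, hx 1⟩, ?_⟩
    simpa only [Fin.sum_univ_two, hvb] using b.sum_repr x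

theorem orbit_eq_image (hv : LinearIndependent ℝ S.v) (q : Plane) :
    S.orbit q = (q + ·) '' Submodule.span ℤ (Set.range (latticeBasis hv)) := by
  ext x
  simp only [orbit, Set.mem_ofPred_eq, Set.mem_image, SetLike.mem_coe,
    Submodule.mem_span_range_iff_exists_fun, coe_latticeBasis, Fin.sum_univ_two,
    ← Int.cast_smul_eq_zsmul ℝ]
  constructor
  · rintro ⟨k, rfl⟩
    exact ⟨_, ⟨k, rfl⟩, by rw [add_assoc]⟩
  · rintro ⟨_, ⟨k, rfl⟩, rfl⟩
    exact ⟨k, by rw [add_assoc]⟩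

theorem isClosed_Zset (hv : LinearIndependent ℝ S.v) : IsClosed S.Zset := by
  have hL : IsClosed ((Submodule.span ℤ (Set.range (latticeBasis hv))).toAddSubgroup : Set Plane) :=
    AddSubgroup.isClosed_of_discrete
  refine isClosed_iUnion_of_finite fun i => ?_
  rw [orbit_eq_image hv]
  exact (Homeomorph.addLeft (S.p i)).isClosedMap _ hL

theorem ae_notMem_Zset (hv : LinearIndependent ℝ S.v) : ∀ᵐ x, x ∉ S.Zset := by
  refine measure_eq_zero_iff_ae_notMem.1 (Set.Countable.measure_zero ?_ _)
  refine Set.countable_iUnion fun i => ?_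
  rw [orbit_eq_image hv]
  have : Countable (Submodule.span ℤ (Set.range (latticeBasis hv))) := inferInstance
  exact (Set.countable_coe_iff.mp this).image _

theorem PeriodicOn.apply_add_of_mem_span (hv : LinearIndependent ℝ S.v) {u : Plane → ℝ}
    (hu : S.PeriodicOn u) {g : Plane} (hg : g ∈ Submodule.span ℤ (Set.range (latticeBasis hv)))
    (x : Plane) : u (g + x) = u x :=
  apply_add_eq_of_mem_span (fun i x => by simpa using hu x i) hg x

namespace Valid

theorem 𝔐_pos (hS : S.Valid) : 0 < S.𝔐 :=
  have : Nonempty (Fin S.N) := Fin.pos_iff_nonempty.mp hS.hN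
  Finset.sum_pos (fun i _ => by exact_mod_cast hS.hm i) Finset.univ_nonempty

theorem σ_pos (hS : S.Valid) (n : ℕ) : 0 < S.σ n :=
  div_pos (pos_of_mul_pos_left (hS.hcoup₁ n) (add_pos (hS.hα n) (hS.hβ n)).le)
    (add_pos (hS.hα n) (hS.hβ n))

theorem ε_pos (hS : S.Valid) (n : ℕ) : 0 < S.ε n :=
  one_div_pos.2 (add_pos (hS.hα n) (hS.hβ n))

theorem σ_div_ε_sq_le (hS : S.Valid) (n : ℕ) : S.σ n / S.ε n ^ 2 ≤ S.𝔑 := by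
  have hsum : S.α n + S.β n ≠ 0 := (add_pos (hS.hα n) (hS.hβ n)).ne'
  convert hS.hcoup₂ n using 1
  rw [GudnasonSetting.σ, GudnasonSetting.ε]
  field_simp

theorem tendsto_σ (hS : S.Valid) : Tendsto S.σ atTop (nhds 0) := by
  have hε : Tendsto S.ε atTop (nhds 0) := by
    rw [show S.ε = fun n => (S.α n + S.β n)⁻¹ from funext fun n => one_div _]
    exact hS.hsum.inv_tendsto_atTop
  refine squeeze_zero (fun n => (hS.σ_pos n).le) (fun n => ?_)
    (by simpa using (hε.pow 2).const_mul S.𝔑)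
  exact (div_le_iff₀ (pow_pos (hS.ε_pos n) 2)).1 (hS.σ_div_ε_sq_le n)

theorem isProbabilityMeasure_fund (hS : S.Valid) :
    IsProbabilityMeasure (volume.restrict S.fund) :=
  ⟨by rw [Measure.restrict_apply_univ, hS.area]⟩

theorem integrableOn_fund (hS : S.Valid) {ψ : Plane → ℝ} (hψ : Continuous ψ) :
    IntegrableOn ψ S.fund := by
  rw [fund_eq_fundamentalDomain hS.indep]
  exact integrableOn_fundamentalDomain _ hψ

theorem integral_lap_eq_zero (hS : S.Valid) {u : Plane → ℝ} (hu : S.PeriodicOn u)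
    (hu₂ : ContDiff ℝ 2 u) : ∫ x in S.fund, lap u x = 0 := by
  rw [fund_eq_fundamentalDomain hS.indep]
  exact integral_lap_eq_zero_of_periodic _ hu₂ fun g hg => hu.apply_add_of_mem_span hS.indep hg

end Valid

namespace IsSolution

variable {n : ℕ} {u₁ u₂ v₁ : Plane → ℝ}

theorem nonlinearity_ae_eq (hS : S.Valid) (h : S.IsSolution n u₁ u₂ v₁) :
    (fun x => 1 / S.ε n ^ 2 * gudnasonNonlinearity (S.σ n) (exp (u₁ x)) (exp (u₂ x)))
      =ᵐ[volume] fun x => -(8 * π * S.𝔐) + lap v₁ x := by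
  filter_upwards [ae_notMem_Zset hS.indep] with x hx
  refine (h.eq₁ x hx).symm.trans ?_
  rw [lap_eq_add_of_eqOn (isClosed_Zset hS.indep).isOpen_compl hS.u₀_smooth
    h.v₁_smooth.contDiffOn (fun y hy => h.v₁_def y hy) hx, hS.u₀_lap x hx]

theorem integrable_nonlinearity (hS : S.Valid) (h : S.IsSolution n u₁ u₂ v₁) :
    Integrable (fun x => 1 / S.ε n ^ 2 * gudnasonNonlinearity (S.σ n) (exp (u₁ x)) (exp (u₂ x)))
      (volume.restrict S.fund) :=
  have := hS.isProbabilityMeasure_fund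
  ((integrable_const _).add (hS.integrableOn_fund (continuous_lap h.v₁_smooth))).congr
    (EventuallyEq.symm (ae_restrict_of_ae (h.nonlinearity_ae_eq hS)))

theorem integral_nonlinearity (hS : S.Valid) (h : S.IsSolution n u₁ u₂ v₁) :
    ∫ x in S.fund, 1 / S.ε n ^ 2 * gudnasonNonlinearity (S.σ n) (exp (u₁ x)) (exp (u₂ x))
      = -(8 * π * S.𝔐) := by
  have := hS.isProbabilityMeasure_fund
  rw [integral_congr_ae (ae_restrict_of_ae (h.nonlinearity_ae_eq hS)),
    integral_add (integrable_const _) (hS.integrableOn_fund (continuous_lap h.v₁_smooth)),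
    hS.integral_lap_eq_zero h.perv h.v₁_smooth]
  simp

theorem aemeasurable_u₁ (hS : S.Valid) (h : S.IsSolution n u₁ u₂ v₁) : AEMeasurable u₁ := by
  have hcont : ContinuousOn u₁ S.Zsetᶜ :=
    (hS.u₀_smooth.continuousOn.add h.v₁_smooth.continuous.continuousOn).congr
      fun y hy => h.v₁_def y hy
  rw [← Measure.restrict_eq_self_of_ae_mem (ae_notMem_Zset hS.indep)]
  exact hcont.aemeasurable (isClosed_Zset hS.indep).isOpen_compl.measurableSet

theorem integrable_exp (hS : S.Valid) (h : S.IsSolution n u₁ u₂ v₁) :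
    Integrable (fun x => 1 / S.ε n ^ 2 * exp (u₁ x)) (volume.restrict S.fund) := by
  have := hS.isProbabilityMeasure_fund
  refine Integrable.of_bound ((measurable_exp.comp_aemeasurable
    (h.aemeasurable_u₁ hS)).const_mul _).restrict.aestronglyMeasurable (1 / S.ε n ^ 2)
    (ae_restrict_of_ae ((ae_notMem_Zset hS.indep).mono fun x hx => ?_))
  have hc : 0 < 1 / S.ε n ^ 2 := one_div_pos.2 (pow_pos (hS.ε_pos n) 2)
  rw [norm_of_nonneg (by positivity)]
  exact mul_le_of_le_one_right hc.le (exp_le_one_iff.2 (h.u₁_neg x hx).le)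

theorem sub_le_integral_exp (hS : S.Valid) (h : S.IsSolution n u₁ u₂ v₁) :
    8 * π * S.𝔐 - S.σ n * S.𝔑 ≤ ∫ x in S.fund, 1 / S.ε n ^ 2 * exp (u₁ x) := by
  have := hS.isProbabilityMeasure_fund
  have hbound : ∀ᵐ x ∂(volume.restrict S.fund),
      -(1 / S.ε n ^ 2 * gudnasonNonlinearity (S.σ n) (exp (u₁ x)) (exp (u₂ x))) - S.σ n * S.𝔑
        ≤ 1 / S.ε n ^ 2 * exp (u₁ x) := by
    refine ae_restrict_of_ae (Eventually.of_forall fun x => ?_)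
    have := neg_mul_gudnasonNonlinearity_le (hS.σ_pos n).le (exp_pos (u₁ x)).le
      (exp_pos (u₂ x)).le (exp_lt_one_iff.2 (h.u₂_neg x)).le
      (one_div_pos.2 (pow_pos (hS.ε_pos n) 2)).le
      ((one_div_mul_eq_div _ _).trans_le (hS.σ_div_ε_sq_le n))
    linarith
  have hN : Integrable (fun x => -(1 / S.ε n ^ 2
      * gudnasonNonlinearity (S.σ n) (exp (u₁ x)) (exp (u₂ x)))) (volume.restrict S.fund) :=
    (h.integrable_nonlinearity hS).neg
  calc 8 * π * S.𝔐 - S.σ n * S.𝔑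
      = ∫ x in S.fund, (-(1 / S.ε n ^ 2
          * gudnasonNonlinearity (S.σ n) (exp (u₁ x)) (exp (u₂ x))) - S.σ n * S.𝔑) := by
        rw [integral_sub hN (integrable_const _), integral_neg, h.integral_nonlinearity hS]
        simp
    _ ≤ ∫ x in S.fund, 1 / S.ε n ^ 2 * exp (u₁ x) :=
        integral_mono_ae (hN.sub (integrable_const _)) (h.integrable_exp hS) hbound

theorem mul_integral_exp_le (hS : S.Valid) (h : S.IsSolution n u₁ u₂ v₁) {ν : ℝ}
    (hsup : ∀ x ∉ S.Zset, u₁ x ≤ -ν) :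
    (1 - exp (-ν)) * ∫ x in S.fund, 1 / S.ε n ^ 2 * exp (u₁ x) ≤ 8 * π * S.𝔐 + 2 * S.𝔑 := by
  have := hS.isProbabilityMeasure_fund
  have hbound : ∀ᵐ x ∂(volume.restrict S.fund),
      (1 - exp (-ν)) * (1 / S.ε n ^ 2 * exp (u₁ x)) - 2 * S.𝔑
        ≤ -(1 / S.ε n ^ 2 * gudnasonNonlinearity (S.σ n) (exp (u₁ x)) (exp (u₂ x))) :=
    ae_restrict_of_ae ((ae_notMem_Zset hS.indep).mono fun x hx =>
      sub_le_neg_mul_gudnasonNonlinearity (hS.σ_pos n).le (exp_pos (u₁ x)).le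
        (exp_le_one_iff.2 (h.u₁_neg x hx).le) (exp_le_exp.2 (hsup x hx))
        (exp_pos (u₂ x)).le (exp_lt_one_iff.2 (h.u₂_neg x)).le
        (one_div_pos.2 (pow_pos (hS.ε_pos n) 2)).le
        ((one_div_mul_eq_div _ _).trans_le (hS.σ_div_ε_sq_le n)))
  have hw : Integrable (fun x => (1 - exp (-ν)) * (1 / S.ε n ^ 2 * exp (u₁ x)))
      (volume.restrict S.fund) :=
    (h.integrable_exp hS).const_mul _
  calc (1 - exp (-ν)) * ∫ x in S.fund, 1 / S.ε n ^ 2 * exp (u₁ x)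
      = (∫ x in S.fund, ((1 - exp (-ν)) * (1 / S.ε n ^ 2 * exp (u₁ x)) - 2 * S.𝔑))
          + 2 * S.𝔑 := by
        rw [integral_sub hw (integrable_const _), integral_const_mul (1 - exp (-ν))]
        simp
    _ ≤ (∫ x in S.fund, -(1 / S.ε n ^ 2
          * gudnasonNonlinearity (S.σ n) (exp (u₁ x)) (exp (u₂ x)))) + 2 * S.𝔑 :=
        add_le_add_left (integral_mono_ae (hw.sub (integrable_const _))
          (h.integrable_nonlinearity hS).neg hbound) _
    _ = 8 * π * S.𝔐 + 2 * S.𝔑 := by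
        rw [integral_neg, h.integral_nonlinearity hS]
        ring

end IsSolution

end GudnasonSetting

open GudnasonSetting in
/-- If `sup_{𝕋∖Z} u₁ₙ ≤ -ν₀ < 0`, then for large `n`,
`4π𝔐 ≤ ∫_𝕋 e^{w₁ₙ} ≤ 2(𝔑 + 8π𝔐)/(1 - e^{-ν₀})`, where `w₁ₙ = u₁ₙ - 2 ln εₙ`. -/
theorem statement12 (S : GudnasonSetting) (hS : S.Valid)
    (u₁ u₂ v₁ : ℕ → Plane → ℝ)
    (hsol : ∀ n, S.IsSolution n (u₁ n) (u₂ n) (v₁ n))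
    (ν₀ : ℝ) (hν₀ : 0 < ν₀) (hsup : ∀ n : ℕ, ∀ x ∉ S.Zset, u₁ n x ≤ -ν₀) :
    ∃ N₀ : ℕ, ∀ n ≥ N₀,
      4 * π * S.𝔐 ≤ (∫ x in S.fund, Real.exp (u₁ n x - 2 * Real.log (S.ε n))) ∧
      (∫ x in S.fund, Real.exp (u₁ n x - 2 * Real.log (S.ε n))) ≤
        2 * (S.𝔑 + 8 * π * S.𝔐) / (1 - Real.exp (-ν₀)) := by
  have h𝔐 : 0 < π * S.𝔐 := mul_pos pi_pos hS.𝔐_pos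
  have hσ𝔑 : Tendsto (fun n => S.σ n * S.𝔑) atTop (nhds 0) := by
    simpa using hS.tendsto_σ.mul_const S.𝔑
  obtain ⟨N₀, hN₀⟩ := eventually_atTop.1 (hσ𝔑.eventually_lt_const (by linarith : 0 < 4 * π * S.𝔐))
  refine ⟨N₀, fun n hn => ?_⟩
  simp_rw [exp_sub_two_mul_log (hS.ε_pos n)]
  have hlower := (hsol n).sub_le_integral_exp hS
  have hupper := (hsol n).mul_integral_exp_le hS (hsup n)
  have hδ : 0 < 1 - exp (-ν₀) := sub_pos.2 (exp_lt_one_iff.2 (neg_lt_zero.2 hν₀))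
  refine ⟨by linarith [hN₀ n hn], (le_div_iff₀ hδ).2 ?_⟩
  linarith [mul_comm (1 - exp (-ν₀)) (∫ x in S.fund, 1 / S.ε n ^ 2 * exp (u₁ n x))]
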